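/- Let J ~ Gamma(1/β, β) (shape 1/β, scale β) with β > 0, and let S ~ Uniform(0,1) be independent of J. Then U = φ^{-1}(−log(S)/J) with φ^{-1}(s) = (1 + βs)^{-1/β} is uniformly distributed on (0,1). -/

import Mathlib

open MeasureTheory ProbabilityTheory Set

lemma gammaMeasure_Iic_zero {a r : ℝ} : gammaMeasure a r (Set.Iic 0) = 0 := by
  rw [gammaMeasure, withDensity_apply _ measurableSet_Iic,
    lintegral_Iic_eq_lintegral_Iio_add_Icc _ le_rfl,
    ProbabilityTheory.lintegral_gammaPDF_of_nonpos le_rfl, zero_add]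
  apply setLIntegral_measure_zero
  simp [Real.volume_Icc]

/-- Marshall–Olkin sampling, one-dimensional marginal: if
`J ~ Gamma(shape 1/β, scale β)` (i.e. rate `1/β`), `S ~ Uniform(0,1)` is
independent of `J`, then `U = (1 + β·(−log S / J))^{-1/β}` is uniform on
`(0,1)`: `P(U ≤ u) = u` for `u ∈ (0,1)`. -/
theorem marshall_olkin_marginal_uniform {Ω : Type*} [MeasurableSpace Ω]
    (μ : Measure Ω) [IsProbabilityMeasure μ] (β : ℝ) (hβ : 0 < β)
    (J S : Ω → ℝ) (hJm : Measurable J) (hSm : Measurable S)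
    (hJ : μ.map J = gammaMeasure (1/β) (1/β))
    (hS : μ.map S = volume.restrict (Set.Ioo 0 1))
    (hindep : IndepFun J S μ) :
    ∀ u ∈ Set.Ioo (0:ℝ) 1,
      (μ {ω | (1 + β * (-Real.log (S ω) / J ω)) ^ (-1/β) ≤ u}).toReal = u := by
  intro u hu
  obtain ⟨hu0, hu1⟩ := hu
  set a : ℝ := 1/β with ha_def
  have ha : 0 < a := by positivity
  have hub : 1 < u ^ (-β) :=
    (Real.one_lt_rpow_iff_of_pos hu0).2 (Or.inr ⟨hu1, by linarith⟩)
  set c : ℝ := (u ^ (-β) - 1) / β with hc_def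
  have hc : 0 < c := div_pos (by linarith) hβ
  have hac : 0 < a + c := by positivity
  -- a.s. positivity of J
  have hJ0 : μ (J ⁻¹' Set.Iic 0) = 0 := by
    rw [← Measure.map_apply hJm measurableSet_Iic, hJ, gammaMeasure_Iic_zero]
  have hJpos : ∀ᵐ ω ∂μ, 0 < J ω := by
    rw [ae_iff]
    simpa [Set.preimage, not_lt] using hJ0
  -- a.s. S ∈ (0,1)
  have hSmem : ∀ᵐ ω ∂μ, S ω ∈ Set.Ioo (0:ℝ) 1 := by
    rw [ae_iff]
    have : μ (S ⁻¹' (Set.Ioo (0:ℝ) 1)ᶜ) = 0 := by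
      rw [← Measure.map_apply hSm measurableSet_Ioo.compl, hS,
        Measure.restrict_apply measurableSet_Ioo.compl]
      simp
    simpa [Set.preimage] using this
  -- rewrite the event
  have hev : μ {ω | (1 + β * (-Real.log (S ω) / J ω)) ^ (-1/β) ≤ u}
      = μ {ω | S ω ≤ Real.exp (-(c * J ω))} := by
    apply measure_congr
    rw [Filter.eventuallyEq_set]
    filter_upwards [hJpos, hSmem] with ω hj hs
    obtain ⟨hs0, hs1⟩ := hs
    have hlog : 0 < -Real.log (S ω) := by
      have := Real.log_neg hs0 hs1; linarith
    set x : ℝ := -Real.log (S ω) / J ω with hx_def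
    have hxpos : 0 < x := div_pos hlog hj
    have hA : (0:ℝ) < 1 + β * x := by nlinarith
    have hpow : ((1 + β * x) ^ (-1/β)) ^ (-β) = 1 + β * x := by
      rw [← Real.rpow_mul hA.le]
      have : (-1/β) * (-β) = 1 := by field_simp
      rw [this, Real.rpow_one]
    have key : (1 + β * x) ^ (-1/β) ≤ u ↔ u ^ (-β) ≤ 1 + β * x := by
      rw [← Real.rpow_le_rpow_iff_of_neg hu0
        (Real.rpow_pos_of_pos hA _) (neg_lt_zero.2 hβ), hpow]
    have hcx : u ^ (-β) ≤ 1 + β * x ↔ c * J ω ≤ -Real.log (S ω) := by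
      have h1 : 1 + β * c = u ^ (-β) := by rw [hc_def]; field_simp; ring
      rw [← h1]
      constructor <;> intro h
      · have hx' : c ≤ x := by nlinarith
        calc c * J ω ≤ x * J ω := by nlinarith
          _ = -Real.log (S ω) := by rw [hx_def, div_mul_cancel₀ _ hj.ne']
      · have hx' : c ≤ x := by
          rw [hx_def, le_div_iff₀ hj]; exact h
        nlinarith
    rw [key, hcx, ← Real.log_le_iff_le_exp hs0]
    constructor <;> intro h <;> linarith
  rw [hev]
  -- pass to the product measure
  have hAm : MeasurableSet {p : ℝ × ℝ | p.2 ≤ Real.exp (-(c * p.1))} :=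
    measurableSet_le measurable_snd ((measurable_fst.const_mul c).neg.exp)
  have hmap : μ {ω | S ω ≤ Real.exp (-(c * J ω))}
      = ((gammaMeasure a a).prod (volume.restrict (Set.Ioo 0 1)))
          {p : ℝ × ℝ | p.2 ≤ Real.exp (-(c * p.1))} := by
    rw [← hJ, ← hS,
      ← (indepFun_iff_map_prod_eq_prod_map_map hJm.aemeasurable hSm.aemeasurable).1 hindep,
      Measure.map_apply (hJm.prodMk hSm) hAm]
    rfl
  rw [hmap, Measure.prod_apply hAm]
  have hgpos : ∀ᵐ j ∂(gammaMeasure a a), 0 < j := by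
    rw [ae_iff]
    simp only [not_lt]; exact gammaMeasure_Iic_zero (a := a) (r := a)
  have hint : ∫⁻ j, (volume.restrict (Set.Ioo (0:ℝ) 1))
        (Prod.mk j ⁻¹' {p : ℝ × ℝ | p.2 ≤ Real.exp (-(c * p.1))}) ∂(gammaMeasure a a)
      = ∫⁻ j, ENNReal.ofReal (Real.exp (-(c * j))) ∂(gammaMeasure a a) := by
    apply lintegral_congr_ae
    filter_upwards [hgpos] with j hj
    have h1 : Prod.mk j ⁻¹' {p : ℝ × ℝ | p.2 ≤ Real.exp (-(c * p.1))}
        = Set.Iic (Real.exp (-(c * j))) := rfl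
    rw [h1, Measure.restrict_apply measurableSet_Iic]
    set t : ℝ := Real.exp (-(c * j)) with ht_def
    have ht0 : 0 < t := Real.exp_pos _
    have ht1 : t ≤ 1 := by
      rw [ht_def, Real.exp_le_one_iff]
      nlinarith
    apply le_antisymm
    · calc volume (Set.Iic t ∩ Set.Ioo 0 1) ≤ volume (Set.Ioc 0 t) :=
            measure_mono (fun y ⟨h1, h2, _⟩ => ⟨h2, h1⟩)
        _ = ENNReal.ofReal t := by rw [Real.volume_Ioc, sub_zero]
    · calc ENNReal.ofReal t = volume (Set.Ioo 0 t) := by rw [Real.volume_Ioo, sub_zero]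
        _ ≤ volume (Set.Iic t ∩ Set.Ioo 0 1) :=
            measure_mono (fun y ⟨h1, h2⟩ => ⟨h2.le, h1, lt_of_lt_of_le h2 ht1⟩)
  have hgm : Measurable (gammaPDF a a) := (measurable_gammaPDFReal a a).ennreal_ofReal
  rw [hint, gammaMeasure, lintegral_withDensity_eq_lintegral_mul _ hgm
    (show Measurable fun j : ℝ => ENNReal.ofReal (Real.exp (-(c * j))) from
      (measurable_id.const_mul c).neg.exp.ennreal_ofReal)]
  have hkey : ∀ j, gammaPDF a a j * ENNReal.ofReal (Real.exp (-(c * j)))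
      = ENNReal.ofReal ((a / (a + c)) ^ a) * gammaPDF a (a + c) j := by
    intro j
    by_cases hj : 0 ≤ j
    · rw [gammaPDF_of_nonneg hj, gammaPDF_of_nonneg hj,
        ← ENNReal.ofReal_mul (by positivity), ← ENNReal.ofReal_mul (by positivity)]
      congr 1
      have he : Real.exp (-(a * j)) * Real.exp (-(c * j)) = Real.exp (-((a + c) * j)) := by
        rw [← Real.exp_add]; ring_nf
      have hr : (a / (a + c)) ^ a * (a + c) ^ a = a ^ a := by
        rw [Real.div_rpow ha.le hac.le,
          div_mul_cancel₀ _ (Real.rpow_pos_of_pos hac a).ne']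
      calc a ^ a / Real.Gamma a * j ^ (a - 1) * Real.exp (-(a * j)) * Real.exp (-(c * j))
          = a ^ a / Real.Gamma a * j ^ (a - 1) * Real.exp (-((a + c) * j)) := by
            rw [mul_assoc, he]
        _ = ((a / (a + c)) ^ a * (a + c) ^ a) / Real.Gamma a * j ^ (a - 1)
              * Real.exp (-((a + c) * j)) := by rw [hr]
        _ = (a / (a + c)) ^ a * ((a + c) ^ a / Real.Gamma a * j ^ (a - 1)
              * Real.exp (-((a + c) * j))) := by ring
    · push_neg at hj
      rw [gammaPDF_of_neg hj, gammaPDF_of_neg hj, zero_mul, mul_zero]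
  simp only [Pi.mul_apply]
  simp_rw [hkey]
  rw [lintegral_const_mul _ (show Measurable (gammaPDF a (a + c)) from
      (measurable_gammaPDFReal _ _).ennreal_ofReal),
    lintegral_gammaPDF_eq_one ha hac, mul_one,
    ENNReal.toReal_ofReal (by positivity)]
  have h1 : a + c = u ^ (-β) / β := by
    rw [ha_def, hc_def]; field_simp; ring
  have h2 : a / (a + c) = u ^ β := by
    rw [h1, ha_def, Real.rpow_neg hu0.le]
    have huβ : (0:ℝ) < u ^ β := Real.rpow_pos_of_pos hu0 β
    field_simp
  rw [h2]
  show (u ^ β) ^ (1/β) = u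
  rw [← Real.rpow_mul hu0.le, mul_one_div_cancel hβ.ne', Real.rpow_one]
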